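/- For the wreath square (K_m)^{≀2}: (1) if v ∈ ℂ^X satisfies v_y = 0 for all y ∉ R_2(x₀) = {y : (x₀,y) ∈ R_2}, Σ_{y∈X} v_y = 0, and A_2 v = θ v for some θ ∈ ℂ, then the line span_ℂ{v} is invariant under every matrix in the Terwilliger algebra T (so if v ≠ 0 it spans a thin irreducible T-module of dimension 1); (2) if v ∈ ℂ^X satisfies v_y = 0 for all y ∉ R_1(x₀) = {y : (x₀,y) ∈ R_1} and Σ_{y∈X} v_y = 0, then span_ℂ{v} is invariant under every matrix in T. -/

import Mathlib

open scoped Classical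

noncomputable section

/-- Relation `R i` of the wreath product scheme `K_{n 1} ≀ ⋯ ≀ K_{n d}`
(coordinates 0-indexed): `R 0` is the identity relation; for `1 ≤ i ≤ d`,
`(x, y) ∈ R i` iff coordinate `i - 1` is the largest coordinate where `x`
and `y` differ. -/
def wRel (d : ℕ) (n : Fin d → ℕ) (i : ℕ) (x y : ∀ k : Fin d, Fin (n k)) : Prop :=
  if h : 1 ≤ i ∧ i ≤ d then
    x ⟨i - 1, by omega⟩ ≠ y ⟨i - 1, by omega⟩ ∧
      ∀ k : Fin d, i - 1 < (k : ℕ) → x k = y k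
  else x = y

/-- Adjacency matrix `A i`. -/
def wA (d : ℕ) (n : Fin d → ℕ) (i : ℕ) :
    Matrix (∀ k : Fin d, Fin (n k)) (∀ k : Fin d, Fin (n k)) ℂ :=
  Matrix.of fun x y => if wRel d n i x y then 1 else 0

/-- The base vertex `(1, 1, …, 1)` (0-indexed: all coordinates `0`). -/
def wBase (d : ℕ) (n : Fin d → ℕ) (hn : ∀ k, 2 ≤ n k) : ∀ k : Fin d, Fin (n k) :=
  fun k => ⟨0, by have := hn k; omega⟩

/-- Dual idempotent `E_i^*` with respect to the base vertex. -/
def wE (d : ℕ) (n : Fin d → ℕ) (hn : ∀ k, 2 ≤ n k) (i : ℕ) :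
    Matrix (∀ k : Fin d, Fin (n k)) (∀ k : Fin d, Fin (n k)) ℂ :=
  Matrix.of fun y z => if y = z ∧ wRel d n i (wBase d n hn) y then 1 else 0

/-- `T₀`: the linear span of the triple products `E_i^* A_j E_h^*`. -/
def wT0 (d : ℕ) (n : Fin d → ℕ) (hn : ∀ k, 2 ≤ n k) :
    Submodule ℂ (Matrix (∀ k : Fin d, Fin (n k)) (∀ k : Fin d, Fin (n k)) ℂ) :=
  Submodule.span ℂ
    {M | ∃ i j h : ℕ, i ≤ d ∧ j ≤ d ∧ h ≤ d ∧
      M = wE d n hn i * wA d n j * wE d n hn h}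

/-- The Terwilliger algebra: the unital subalgebra generated by the `A i`
and the `E_i^*`. -/
def wT (d : ℕ) (n : Fin d → ℕ) (hn : ∀ k, 2 ≤ n k) :
    Subalgebra ℂ (Matrix (∀ k : Fin d, Fin (n k)) (∀ k : Fin d, Fin (n k)) ℂ) :=
  Algebra.adjoin ℂ
    ({M | ∃ i ≤ d, M = wA d n i} ∪ {M | ∃ i ≤ d, M = wE d n hn i})

/-- The constant family for the wreath square: `n_1 = n_2 = m`. -/
abbrev n2 (m : ℕ) : Fin 2 → ℕ := fun _ => m

/-- The Terwilliger algebra of `(K_m)^{≀2}`. -/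
def T2 (m : ℕ) (hm : 2 ≤ m) :
    Subalgebra ℂ (Matrix (∀ k : Fin 2, Fin (n2 m k)) (∀ k : Fin 2, Fin (n2 m k)) ℂ) :=
  wT 2 (n2 m) fun _ => hm

/-!
Every generator of `T` has `v` as an eigenvector, and the matrices having `v` as an eigenvector
form a subalgebra, which therefore contains `T`. The `E_i^*` act on `v` by `0` or `1`, because the
sets `R_i(x₀)` partition `X` and `v` is supported on one of them. With `B = I + A_1` the matrix of
"same second coordinate" and `J` the all-ones matrix, `A_1 = B - I` and `A_2 = J - B`, while
`J v = 0` as `v` sums to zero; so it suffices that `v` is an eigenvector of `B`. In (1) this is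
`B v = -θ v`, from `A_2 v = θ v`; in (2) `B v = 0`, since `v` lives in a single fibre of the second
coordinate and sums to zero.
-/

open Matrix

namespace Matrix

variable {ι R : Type*} [Fintype ι] [DecidableEq ι] [CommRing R]

def lineStabilizer (v : ι → R) : Subalgebra R (Matrix ι ι R) where
  carrier := {M | ∃ c : R, M *ᵥ v = c • v}
  mul_mem' := by
    rintro M N ⟨a, ha⟩ ⟨b, hb⟩
    exact ⟨a * b, by rw [← mulVec_mulVec, hb, mulVec_smul, ha, smul_smul, mul_comm]⟩
  add_mem' := by
    rintro M N ⟨a, ha⟩ ⟨b, hb⟩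
    exact ⟨a + b, by rw [add_mulVec, ha, hb, add_smul]⟩
  algebraMap_mem' r :=
    ⟨r, by rw [Algebra.algebraMap_eq_smul_one, smul_mulVec, one_mulVec]⟩

theorem mulVec_mem_span_singleton_of_mem_lineStabilizer {v w : ι → R} {M : Matrix ι ι R}
    (hM : M ∈ lineStabilizer v) (hw : w ∈ Submodule.span R {v}) :
    M *ᵥ w ∈ Submodule.span R {v} := by
  obtain ⟨c, hc⟩ := hM
  obtain ⟨a, rfl⟩ := Submodule.mem_span_singleton.mp hw
  rw [mulVec_smul, hc, smul_smul]
  exact Submodule.smul_mem _ _ (Submodule.mem_span_singleton_self v)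

end Matrix

section Wreath

variable {d : ℕ} {n : Fin d → ℕ}

theorem wRel_zero_iff {x y : ∀ k, Fin (n k)} : wRel d n 0 x y ↔ x = y := by
  unfold wRel
  rw [dif_neg (by omega)]

theorem not_wRel_of_wRel {i j : ℕ} (hi : i ≤ d) (hj : j ≤ d) (hij : i ≠ j)
    {x y : ∀ k, Fin (n k)} (h : wRel d n i x y) : ¬ wRel d n j x y := by
  wlog hlt : i < j generalizing i j
  · exact fun h' => this hj hi hij.symm h' (by omega) h
  intro h'
  unfold wRel at h h'
  rw [dif_pos (⟨by omega, hj⟩ : 1 ≤ j ∧ j ≤ d)] at h'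
  split_ifs at h
  · exact h'.1 (h.2 _ (by simp only; omega))
  · exact h'.1 (congrFun h _)

theorem wA_zero : wA d n 0 = 1 := by
  ext x y
  simp [wA, wRel_zero_iff, one_apply]

theorem wE_eq_diagonal (hn : ∀ k, 2 ≤ n k) (i : ℕ) :
    wE d n hn i = diagonal fun y => if wRel d n i (wBase d n hn) y then 1 else 0 := by
  ext y z
  by_cases hyz : y = z
  · subst hyz
    simp [wE]
  · simp [wE, hyz]

theorem wE_mulVec_eq_ite {hn : ∀ k, 2 ≤ n k} {i j : ℕ} (hi : i ≤ d) (hj : j ≤ d)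
    {v : (∀ k, Fin (n k)) → ℂ} (hv : ∀ y, ¬ wRel d n j (wBase d n hn) y → v y = 0) :
    wE d n hn i *ᵥ v = if i = j then v else 0 := by
  ext y
  rw [wE_eq_diagonal, mulVec_diagonal]
  by_cases hij : i = j
  · subst hij
    by_cases hy : wRel d n i (wBase d n hn) y <;> simp [hy, hv]
  · by_cases hy : wRel d n i (wBase d n hn) y
    · simp [hij, hv y (not_wRel_of_wRel hi hj hij hy)]
    · simp [hij, hy]

theorem wE_mem_lineStabilizer {hn : ∀ k, 2 ≤ n k} {i j : ℕ} (hi : i ≤ d) (hj : j ≤ d)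
    {v : (∀ k, Fin (n k)) → ℂ} (hv : ∀ y, ¬ wRel d n j (wBase d n hn) y → v y = 0) :
    wE d n hn i ∈ lineStabilizer v :=
  ⟨if i = j then 1 else 0, by rw [wE_mulVec_eq_ite hi hj hv]; split_ifs <;> simp⟩

theorem wT_le_lineStabilizer {hn : ∀ k, 2 ≤ n k} {v : (∀ k, Fin (n k)) → ℂ}
    (hA : ∀ i ≤ d, wA d n i ∈ lineStabilizer v) (hE : ∀ i ≤ d, wE d n hn i ∈ lineStabilizer v) :
    wT d n hn ≤ lineStabilizer v :=
  Algebra.adjoin_le <| by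
    rintro M (⟨i, hi, rfl⟩ | ⟨i, hi, rfl⟩)
    exacts [hA i hi, hE i hi]

end Wreath

section WreathSquare

variable {n : Fin 2 → ℕ} {v : (∀ k : Fin 2, Fin (n k)) → ℂ}

def wBlock (n : Fin 2 → ℕ) : Matrix (∀ k : Fin 2, Fin (n k)) (∀ k : Fin 2, Fin (n k)) ℂ :=
  of fun x y => if x 1 = y 1 then 1 else 0

theorem wRel_two_one_iff {x y : ∀ k : Fin 2, Fin (n k)} :
    wRel 2 n 1 x y ↔ x 0 ≠ y 0 ∧ x 1 = y 1 := by
  unfold wRel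
  rw [dif_pos (by omega)]
  simp [Fin.forall_fin_two]

theorem wRel_two_two_iff {x y : ∀ k : Fin 2, Fin (n k)} : wRel 2 n 2 x y ↔ x 1 ≠ y 1 := by
  unfold wRel
  rw [dif_pos (by omega)]
  simp [Fin.forall_fin_two]

theorem wA_one_two : wA 2 n 1 = wBlock n - 1 := by
  ext x y
  have hxy : x = y ↔ x 0 = y 0 ∧ x 1 = y 1 := by simp [funext_iff, Fin.forall_fin_two]
  by_cases h0 : x 0 = y 0 <;> by_cases h1 : x 1 = y 1 <;>
    simp [wA, wBlock, wRel_two_one_iff, one_apply, hxy, h0, h1]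

theorem wA_two_two_add_wBlock : wA 2 n 2 + wBlock n = of fun _ _ => 1 := by
  ext x y
  by_cases h : x 1 = y 1 <;> simp [wA, wBlock, wRel_two_two_iff, h]

theorem wA_two_two_mulVec (hsum : ∑ y, v y = 0) : wA 2 n 2 *ᵥ v = -(wBlock n *ᵥ v) := by
  have h : (wA 2 n 2 + wBlock n) *ᵥ v = 0 := by
    rw [wA_two_two_add_wBlock]
    ext x
    simp [mulVec, dotProduct, hsum]
  rw [add_mulVec] at h
  exact eq_neg_of_add_eq_zero_left h

theorem wBlock_mulVec_eq_zero {b : Fin (n 1)} (hv : ∀ y, y 1 ≠ b → v y = 0)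
    (hsum : ∑ y, v y = 0) : wBlock n *ᵥ v = 0 := by
  ext x
  simp only [mulVec, dotProduct, wBlock, of_apply, ite_mul, one_mul, zero_mul, Pi.zero_apply]
  by_cases hx : x 1 = b
  · refine (Finset.sum_congr rfl fun y _ => ?_).trans hsum
    split_ifs with h
    · rfl
    · exact (hv y (hx ▸ Ne.symm h)).symm
  · refine Finset.sum_eq_zero fun y _ => ?_
    split_ifs with h
    · exact hv y (h ▸ hx)
    · rfl

theorem wA_two_mem_lineStabilizer {c : ℂ} (hsum : ∑ y, v y = 0)
    (hB : wBlock n *ᵥ v = c • v) {i : ℕ} (hi : i ≤ 2) : wA 2 n i ∈ lineStabilizer v := by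
  interval_cases i
  · exact ⟨1, by rw [wA_zero, one_mulVec, one_smul]⟩
  · exact ⟨c - 1, by rw [wA_one_two, sub_mulVec, one_mulVec, hB, sub_smul, one_smul]⟩
  · exact ⟨-c, by rw [wA_two_two_mulVec hsum, hB, neg_smul]⟩

theorem wT_two_le_lineStabilizer {hn : ∀ k, 2 ≤ n k} {j : ℕ} {c : ℂ} (hj : j ≤ 2)
    (hv : ∀ y, ¬ wRel 2 n j (wBase 2 n hn) y → v y = 0) (hsum : ∑ y, v y = 0)
    (hB : wBlock n *ᵥ v = c • v) : wT 2 n hn ≤ lineStabilizer v :=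
  wT_le_lineStabilizer (fun _ hi => wA_two_mem_lineStabilizer hsum hB hi)
    fun _ hi => wE_mem_lineStabilizer hi hj hv

end WreathSquare

/-- For the wreath square `(K_m)^{≀2}`:
(1) if `v` is supported on `R_2(x₀)`, `Σ_y v_y = 0`, and `A_2 v = θ v`, then
the line `span ℂ {v}` is invariant under every matrix in the Terwilliger
algebra `T`;
(2) if `v` is supported on `R_1(x₀)` and `Σ_y v_y = 0`, then `span ℂ {v}`
is invariant under every matrix in `T`. -/
theorem line_invariant_wreath_square (m : ℕ) (hm : 2 ≤ m) :
    (∀ v : (∀ k : Fin 2, Fin (n2 m k)) → ℂ,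
      (∀ y, ¬ wRel 2 (n2 m) 2 (wBase 2 (n2 m) fun _ => hm) y → v y = 0) →
      (∑ y, v y = 0) →
      ∀ θ : ℂ, (wA 2 (n2 m) 2).mulVec v = θ • v →
      ∀ M ∈ T2 m hm, ∀ w ∈ Submodule.span ℂ {v},
        M.mulVec w ∈ Submodule.span ℂ {v}) ∧
    (∀ v : (∀ k : Fin 2, Fin (n2 m k)) → ℂ,
      (∀ y, ¬ wRel 2 (n2 m) 1 (wBase 2 (n2 m) fun _ => hm) y → v y = 0) →
      (∑ y, v y = 0) →
      ∀ M ∈ T2 m hm, ∀ w ∈ Submodule.span ℂ {v},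
        M.mulVec w ∈ Submodule.span ℂ {v}) := by
  refine ⟨fun v hv hsum θ hθ M hM w hw => ?_, fun v hv hsum M hM w hw => ?_⟩
  · have hB : wBlock (n2 m) *ᵥ v = (-θ) • v := by
      rw [neg_smul, ← hθ, wA_two_two_mulVec hsum, neg_neg]
    exact mulVec_mem_span_singleton_of_mem_lineStabilizer
      (wT_two_le_lineStabilizer le_rfl hv hsum hB hM) hw
  · have hB : wBlock (n2 m) *ᵥ v = (0 : ℂ) • v := by
      rw [zero_smul]
      refine wBlock_mulVec_eq_zero (b := wBase 2 (n2 m) (fun _ => hm) 1) (fun y hy => ?_) hsum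
      exact hv y fun h => hy (wRel_two_one_iff.mp h).2.symm
    exact mulVec_mem_span_singleton_of_mem_lineStabilizer
      (wT_two_le_lineStabilizer one_le_two hv hsum hB hM) hw
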